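/- Let μ > 0 and let C be an n×n real symmetric matrix with eigendecomposition C = Qᵀ D Q, where Q is orthogonal and D = diag(d₁, …, dₙ). Then the matrix S = Qᵀ E Q, with E = diag(e₁, …, eₙ) and eᵢ = (dᵢ + √(dᵢ² + 4μ))/2, is symmetric positive definite, satisfies S − C − μ S⁻¹ = 0, and is the unique minimizer over the cone of symmetric positive definite matrices of F_μ(S) = (1/2)‖S − C‖_F² − μ log det S. -/

import Mathlib

open Matrix

/-- The smoothing objective for the positive semidefinite cone:
`F_μ(X) = (1/2)‖X − C‖_F² − μ log det X`, with the Frobenius norm squared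
expressed via the trace inner product as `tr((X − C)(X − C)ᵀ)`. -/
noncomputable def psdObj (n : ℕ) (μ : ℝ) (C X : Matrix (Fin n) (Fin n) ℝ) : ℝ :=
  (1 / 2) * Matrix.trace ((X - C) * (X - C)ᵀ) - μ * Real.log X.det

/-!
`F_μ` is the sum of the quadratic `½‖X − C‖²`, whose expansion around `S` is exact,
and of `−μ log det`, which lies above its tangent at `S`:
`log det X − log det S ≤ tr(S⁻¹(X − S))`, i.e. `log λ ≤ λ − 1` for the eigenvalues `λ`
of `S^{-1/2} X S^{-1/2}`. Hence at a stationary point `S − C = μ S⁻¹` one gets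
`F_μ(X) ≥ F_μ(S) + ½‖X − S‖²`, which gives minimality and uniqueness at once.
Diagonalising `C`, stationarity reduces to the scalar equation `e − d − μ/e = 0`
for each eigenvalue.
-/

/-- The positive root of `e² − d e − μ`. -/
noncomputable def smoothingRoot (μ d : ℝ) : ℝ := (d + √(d ^ 2 + 4 * μ)) / 2

lemma smoothingRoot_pos {μ : ℝ} (hμ : 0 < μ) (d : ℝ) : 0 < smoothingRoot μ d := by
  have hlt : |d| < √(d ^ 2 + 4 * μ) := by
    rw [← Real.sqrt_sq_eq_abs]
    exact Real.sqrt_lt_sqrt (sq_nonneg d) (by linarith)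
  unfold smoothingRoot
  linarith [neg_abs_le d]

lemma smoothingRoot_sub_eq_mul_inv {μ : ℝ} (hμ : 0 < μ) (d : ℝ) :
    smoothingRoot μ d - d = μ * (smoothingRoot μ d)⁻¹ := by
  have hpos := smoothingRoot_pos hμ d
  have hsq : √(d ^ 2 + 4 * μ) ^ 2 = d ^ 2 + 4 * μ := Real.sq_sqrt (by positivity)
  field_simp
  unfold smoothingRoot
  nlinarith [hsq]

namespace Matrix

section Trace

variable {m n R : Type*} [Fintype m] [Fintype n]

lemma trace_add_mul_transpose_add [CommRing R] (A B : Matrix m n R) :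
    ((A + B) * (A + B)ᵀ).trace = (A * Aᵀ).trace + 2 * (A * Bᵀ).trace + (B * Bᵀ).trace := by
  have hswap : (B * Aᵀ).trace = (A * Bᵀ).trace := by
    rw [← trace_transpose, transpose_mul, transpose_transpose]
  rw [transpose_add, Matrix.add_mul, Matrix.mul_add, Matrix.mul_add, trace_add, trace_add,
    trace_add, hswap]
  ring

lemma trace_mul_transpose_self_nonneg (A : Matrix m n ℝ) : 0 ≤ (A * Aᵀ).trace := by
  simpa using (posSemidef_self_mul_conjTranspose A).trace_nonneg

lemma trace_mul_transpose_self_eq_zero_iff {A : Matrix m n ℝ} : (A * Aᵀ).trace = 0 ↔ A = 0 := by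
  simpa using trace_mul_conjTranspose_self_eq_zero_iff (A := A)

end Trace

variable {ι : Type*}

lemma PosDef.isSymm {A : Matrix ι ι ℝ} (hA : A.PosDef) : A.IsSymm :=
  isHermitian_iff_isSymm.mp hA.isHermitian

variable [Fintype ι] [DecidableEq ι]

lemma PosDef.log_det_le_trace_sub_card {A : Matrix ι ι ℝ} (hA : A.PosDef) :
    Real.log A.det ≤ A.trace - Fintype.card ι := by
  rw [hA.isHermitian.det_eq_prod_eigenvalues, hA.isHermitian.trace_eq_sum_eigenvalues]
  simp only [RCLike.ofReal_real_eq_id, id_eq]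
  rw [Real.log_prod fun i _ => (hA.eigenvalues_pos i).ne']
  calc ∑ i, Real.log (hA.isHermitian.eigenvalues i)
      ≤ ∑ i, (hA.isHermitian.eigenvalues i - 1) :=
        Finset.sum_le_sum fun i _ => Real.log_le_sub_one_of_pos (hA.eigenvalues_pos i)
    _ = ∑ i, hA.isHermitian.eigenvalues i - Fintype.card ι := by
        simp [Finset.sum_sub_distrib]

open scoped MatrixOrder in
lemma PosDef.log_det_sub_log_det_le {S X : Matrix ι ι ℝ} (hS : S.PosDef) (hX : X.PosDef) :
    Real.log X.det - Real.log S.det ≤ (S⁻¹ * X).trace - Fintype.card ι := by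
  set R := CFC.sqrt S⁻¹
  have hR : star R = R := (CFC.sqrt_nonneg S⁻¹).isSelfAdjoint
  have hRR : R * R = S⁻¹ := CFC.sqrt_mul_sqrt_self S⁻¹ hS.inv.posSemidef.nonneg
  have hRdet : R.det * R.det = S.det⁻¹ := by
    rw [← det_mul, hRR, det_nonsing_inv, Ring.inverse_eq_inv']
  have hRunit : IsUnit R := (isUnit_iff_isUnit_det R).mpr <|
    isUnit_iff_ne_zero.mpr (left_ne_zero_of_mul (hRdet ▸ inv_ne_zero hS.det_pos.ne'))
  have hA : (star R * X * R).PosDef := (IsUnit.posDef_star_left_conjugate_iff hRunit).mpr hX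
  have hdet : (star R * X * R).det = X.det * S.det⁻¹ := by
    rw [hR, det_mul, det_mul, ← hRdet]; ring
  have htrace : (star R * X * R).trace = (S⁻¹ * X).trace := by
    rw [trace_mul_cycle, hR, hRR]
  have hlog := hA.log_det_le_trace_sub_card
  rw [hdet, htrace, Real.log_mul hX.det_pos.ne' (inv_ne_zero hS.det_pos.ne'),
    Real.log_inv] at hlog
  linarith

lemma inv_transpose_mul_diagonal_mul {K : Type*} [Field K] {Q : Matrix ι ι K}
    (hQ : Qᵀ * Q = 1) {e : ι → K} (he : ∀ i, e i ≠ 0) :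
    (Qᵀ * diagonal e * Q)⁻¹ = Qᵀ * diagonal e⁻¹ * Q := by
  refine inv_eq_left_inv ?_
  have hdiag : diagonal e⁻¹ * diagonal e = 1 := by
    rw [diagonal_mul_diagonal, ← diagonal_one]
    exact congrArg diagonal (funext fun i => inv_mul_cancel₀ (he i))
  calc Qᵀ * diagonal e⁻¹ * Q * (Qᵀ * diagonal e * Q)
      = Qᵀ * (diagonal e⁻¹ * (Q * Qᵀ) * diagonal e) * Q := by simp only [mul_assoc]
    _ = 1 := by rw [mul_eq_one_comm.mp hQ, Matrix.mul_one, hdiag, Matrix.mul_one, hQ]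

lemma posDef_transpose_mul_diagonal_mul {Q : Matrix ι ι ℝ} (hQ : Qᵀ * Q = 1) {e : ι → ℝ}
    (he : ∀ i, 0 < e i) : (Qᵀ * diagonal e * Q).PosDef :=
  (IsUnit.posDef_star_left_conjugate_iff ((isUnit_iff_isUnit_det Q).mpr
    (isUnit_det_of_left_inverse hQ))).mpr (PosDef.diagonal he)

end Matrix

lemma psdObj_add_half_trace_le {n : ℕ} {μ : ℝ} (hμ : 0 ≤ μ) {C S X : Matrix (Fin n) (Fin n) ℝ}
    (hS : S.PosDef) (hX : X.PosDef) (hstat : S - C = μ • S⁻¹) :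
    psdObj n μ C S + (1 / 2) * ((X - S) * (X - S)ᵀ).trace ≤ psdObj n μ C X := by
  have hcross : ((X - S) * (S - C)ᵀ).trace = μ * ((S⁻¹ * X).trace - n) := by
    rw [hstat, transpose_smul, hS.inv.isSymm.eq, mul_smul_comm, trace_smul, trace_mul_comm,
      Matrix.mul_sub, trace_sub, nonsing_inv_mul S hS.det_pos.ne'.isUnit, trace_one]
    simp only [smul_eq_mul, Fintype.card_fin]
  have htangent := mul_le_mul_of_nonneg_left (hS.log_det_sub_log_det_le hX) hμ
  rw [Fintype.card_fin] at htangent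
  unfold psdObj
  rw [show X - C = (X - S) + (S - C) by abel, trace_add_mul_transpose_add, hcross]
  linarith

theorem stmt5_general (n : ℕ) (μ : ℝ) (hμ : 0 < μ) (C Q : Matrix (Fin n) (Fin n) ℝ)
    (d : Fin n → ℝ) (hQ : Qᵀ * Q = 1)
    (hdecomp : C = Qᵀ * Matrix.diagonal d * Q) :
    let S : Matrix (Fin n) (Fin n) ℝ :=
      Qᵀ * Matrix.diagonal (fun i => (d i + Real.sqrt ((d i) ^ 2 + 4 * μ)) / 2) * Q
    S.IsSymm ∧ S.PosDef ∧
    S - C - μ • S⁻¹ = 0 ∧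
    (∀ X : Matrix (Fin n) (Fin n) ℝ, X.IsSymm → X.PosDef →
      psdObj n μ C S ≤ psdObj n μ C X) ∧
    (∀ X : Matrix (Fin n) (Fin n) ℝ, X.IsSymm → X.PosDef →
      (∀ Y : Matrix (Fin n) (Fin n) ℝ, Y.IsSymm → Y.PosDef →
        psdObj n μ C X ≤ psdObj n μ C Y) → X = S) := by
  intro S
  set e : Fin n → ℝ := fun i => smoothingRoot μ (d i)
  have he : ∀ i, 0 < e i := fun i => smoothingRoot_pos hμ (d i)
  have hSpd : S.PosDef := posDef_transpose_mul_diagonal_mul hQ he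
  have hstat : S - C = μ • S⁻¹ := by
    have hroot : (fun i => e i - d i) = μ • e⁻¹ :=
      funext fun i => smoothingRoot_sub_eq_mul_inv hμ (d i)
    change Qᵀ * diagonal e * Q - C = μ • (Qᵀ * diagonal e * Q)⁻¹
    rw [inv_transpose_mul_diagonal_mul hQ fun i => (he i).ne', hdecomp, ← Matrix.sub_mul,
      ← Matrix.mul_sub, diagonal_sub, hroot, diagonal_smul, Matrix.mul_smul, Matrix.smul_mul]
  have hdescent (X : Matrix (Fin n) (Fin n) ℝ) (hX : X.PosDef) :=
    psdObj_add_half_trace_le hμ.le hSpd hX hstat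
  refine ⟨hSpd.isSymm, hSpd, sub_eq_zero.mpr hstat, fun X _ hX => ?_, fun X _ hX hmin => ?_⟩
  · linarith [hdescent X hX, trace_mul_transpose_self_nonneg (X - S)]
  · have hnorm : ((X - S) * (X - S)ᵀ).trace = 0 :=
      le_antisymm (by linarith [hdescent X hX, hmin S hSpd.isSymm hSpd])
        (trace_mul_transpose_self_nonneg _)
    exact sub_eq_zero.mp (trace_mul_transpose_self_eq_zero_iff.mp hnorm)

/-- Let `μ > 0` and let `C` be a real symmetric matrix with eigendecomposition
`C = Qᵀ D Q` (`Q` orthogonal, `D = diag(d)`). Then `S = Qᵀ E Q`, with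
`E = diag(e)` and `eᵢ = (dᵢ + √(dᵢ² + 4μ))/2`, is symmetric positive definite,
satisfies `S − C − μS⁻¹ = 0`, and is the unique minimizer of
`F_μ(X) = (1/2)‖X − C‖_F² − μ log det X` over symmetric positive definite matrices. -/
theorem stmt5 (n : ℕ) (μ : ℝ) (hμ : 0 < μ) (C Q : Matrix (Fin n) (Fin n) ℝ)
    (d : Fin n → ℝ) (hC : C.IsSymm) (hQ : Qᵀ * Q = 1)
    (hdecomp : C = Qᵀ * Matrix.diagonal d * Q) :
    let S : Matrix (Fin n) (Fin n) ℝ :=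
      Qᵀ * Matrix.diagonal (fun i => (d i + Real.sqrt ((d i) ^ 2 + 4 * μ)) / 2) * Q
    S.IsSymm ∧ S.PosDef ∧
    S - C - μ • S⁻¹ = 0 ∧
    (∀ X : Matrix (Fin n) (Fin n) ℝ, X.IsSymm → X.PosDef →
      psdObj n μ C S ≤ psdObj n μ C X) ∧
    (∀ X : Matrix (Fin n) (Fin n) ℝ, X.IsSymm → X.PosDef →
      (∀ Y : Matrix (Fin n) (Fin n) ℝ, Y.IsSymm → Y.PosDef →
        psdObj n μ C X ≤ psdObj n μ C Y) → X = S) :=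
  stmt5_general n μ hμ C Q d hQ hdecomp
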